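/- Let a, b, c be the tree automorphisms of the binary tree defined by the wreath recursions a = σ(c,b), b = (a,c), c = (b,a) (automaton number 870). Then c = a b⁻¹ a, the element μ = b⁻¹a has infinite order, b has infinite order, b⁻¹ μ b = μ³, and the group generated by a, b, c is isomorphic to the Baumslag–Solitar group BS(1,3) = ⟨t, x | t⁻¹ x t = x³⟩ via t ↦ b, x ↦ b⁻¹a. -/

import Mathlib

/-- An invertible automaton over the two-letter alphabet `Bool`:
a set of states `Q`, a transition map and an output map such that each state
acts on the alphabet by a permutation. -/
structure BinAutomaton (Q : Type*) where
  trans : Q → Bool → Q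
  out : Q → Bool → Bool
  out_bij : ∀ q, Function.Bijective (out q)

namespace BinAutomaton

variable {Q : Type*} (A : BinAutomaton Q)

/-- The action of a state on finite binary words:
`q(xw) = ρ(q,x) · (τ(q,x))(w)`. -/
def act : Q → List Bool → List Bool
  | _, [] => []
  | q, x :: w => A.out q x :: act (A.trans q x) w

theorem act_injective (q : Q) : Function.Injective (A.act q) := by
  intro u
  induction u generalizing q with
  | nil =>
    intro v h
    cases v with
    | nil => rfl
    | cons y v => simp [act] at h
  | cons x u ih =>
    intro v h
    cases v with
    | nil => simp [act] at h
    | cons y v =>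
      simp only [act, List.cons.injEq] at h
      obtain ⟨h1, h2⟩ := h
      obtain rfl : x = y := (A.out_bij q).1 h1
      rw [ih _ h2]

theorem act_surjective (q : Q) : Function.Surjective (A.act q) := by
  intro v
  induction v generalizing q with
  | nil => exact ⟨[], rfl⟩
  | cons y v ih =>
    obtain ⟨x, hx⟩ := (A.out_bij q).2 y
    obtain ⟨w, hw⟩ := ih (A.trans q x)
    exact ⟨x :: w, by simp [act, hx, hw]⟩

/-- The tree automorphism defined by the state `q`. -/
noncomputable def perm (q : Q) : Equiv.Perm (List Bool) :=
  Equiv.ofBijective (A.act q) ⟨A.act_injective q, A.act_surjective q⟩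

/-- The group generated by the automaton: the subgroup of the group of
bijections of the binary tree generated by the states. -/
noncomputable def autGroup : Subgroup (Equiv.Perm (List Bool)) :=
  Subgroup.closure (Set.range A.perm)

end BinAutomaton

/-- Helper constructing a 3-state automaton from the sections at `0`, the
sections at `1`, and the activity of each state. -/
def mkAut3 (t0 t1 : Fin 3 → Fin 3) (actv : Fin 3 → Bool) : BinAutomaton (Fin 3) where
  trans q x := cond x (t1 q) (t0 q)
  out q x := xor (actv q) x
  out_bij q := by
    have h : ∀ b : Bool, Function.Bijective fun x => xor b x := by decide
    exact h (actv q)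

/-- Automaton number 870:
`a = σ(c,b)`, `b = (a,c)`, `c = (b,a)` (states `0 = a`, `1 = b`, `2 = c`). -/
def A870 : BinAutomaton (Fin 3) :=
  mkAut3 ![2, 0, 1] ![1, 2, 0] ![true, false, false]

noncomputable def a : Equiv.Perm (List Bool) := A870.perm 0
noncomputable def b : Equiv.Perm (List Bool) := A870.perm 1
noncomputable def c : Equiv.Perm (List Bool) := A870.perm 2

/-- The single relation `t⁻¹xt = x³` of the Baumslag–Solitar group `BS(1,3)`,
with `0 = t` and `1 = x`. -/
def relsBS13 : Set (FreeGroup (Fin 2)) :=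
  {(FreeGroup.of 0)⁻¹ * FreeGroup.of 1 * FreeGroup.of 0 * (FreeGroup.of 1 ^ 3)⁻¹}

namespace Aut870

open BinAutomaton

/-- The inverse automaton: state `q` acts as the inverse of state `q` of `A870`. -/
def A870inv : BinAutomaton (Fin 3) :=
  mkAut3 ![1, 0, 1] ![2, 2, 0] ![true, false, false]

lemma invR (w : List Bool) : ∀ q, A870.act q (A870inv.act q w) = w := by
  induction w with
  | nil => intro q; rfl
  | cons x u ih =>
    intro q
    have h1 : ∀ q x, A870.out q (A870inv.out q x) = x := by decide
    have h2 : ∀ q x, A870.trans q (A870inv.out q x) = A870inv.trans q x := by decide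
    show A870.out q (A870inv.out q x) ::
      A870.act (A870.trans q (A870inv.out q x)) (A870inv.act (A870inv.trans q x) u) = x :: u
    rw [h1, h2, ih]

lemma invL (q : Fin 3) (w : List Bool) : A870inv.act q (A870.act q w) = w := by
  induction w generalizing q with
  | nil => rfl
  | cons x u ih =>
    have h1 : ∀ q x, A870inv.out q (A870.out q x) = x := by decide
    have h2 : ∀ q x, A870inv.trans q (A870.out q x) = A870.trans q x := by decide
    show A870inv.out q (A870.out q x) ::
      A870inv.act (A870inv.trans q (A870.out q x)) (A870.act (A870.trans q x) u) = x :: u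
    rw [h1, h2, ih]

-- unfolding lemmas
lemma fa0 (w : List Bool) : A870.act 0 (false :: w) = true :: A870.act 2 w := rfl
lemma fa1 (w : List Bool) : A870.act 0 (true :: w) = false :: A870.act 1 w := rfl
lemma fb0 (w : List Bool) : A870.act 1 (false :: w) = false :: A870.act 0 w := rfl
lemma fb1 (w : List Bool) : A870.act 1 (true :: w) = true :: A870.act 2 w := rfl
lemma fc0 (w : List Bool) : A870.act 2 (false :: w) = false :: A870.act 1 w := rfl
lemma fc1 (w : List Bool) : A870.act 2 (true :: w) = true :: A870.act 0 w := rfl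
lemma ga0 (w : List Bool) : A870inv.act 0 (false :: w) = true :: A870inv.act 1 w := rfl
lemma ga1 (w : List Bool) : A870inv.act 0 (true :: w) = false :: A870inv.act 2 w := rfl
lemma gb0 (w : List Bool) : A870inv.act 1 (false :: w) = false :: A870inv.act 0 w := rfl
lemma gb1 (w : List Bool) : A870inv.act 1 (true :: w) = true :: A870inv.act 2 w := rfl
lemma gc0 (w : List Bool) : A870inv.act 2 (false :: w) = false :: A870inv.act 1 w := rfl
lemma gc1 (w : List Bool) : A870inv.act 2 (true :: w) = true :: A870inv.act 0 w := rfl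

/-- The key mutual identities: `c = ab⁻¹a`, `a = ca⁻¹b`, `a⁻¹bc = ba⁻¹b`,
`b⁻¹ab = cb⁻¹a`, as statements about the action on words. -/
lemma core (w : List Bool) :
    A870.act 2 w = A870.act 0 (A870inv.act 1 (A870.act 0 w)) ∧
    A870.act 0 w = A870.act 2 (A870inv.act 0 (A870.act 1 w)) ∧
    A870inv.act 0 (A870.act 1 (A870.act 2 w)) =
      A870.act 1 (A870inv.act 0 (A870.act 1 w)) ∧
    A870inv.act 1 (A870.act 0 (A870.act 1 w)) =
      A870.act 2 (A870inv.act 1 (A870.act 0 w)) := by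
  induction w with
  | nil => exact ⟨rfl, rfl, rfl, rfl⟩
  | cons x u ih =>
    obtain ⟨ih1, ih2, ih5, ih6⟩ := ih
    refine ⟨?_, ?_, ?_, ?_⟩ <;> cases x <;>
      simp only [fa0, fa1, fb0, fb1, fc0, fc1, ga0, ga1, gb0, gb1, gc0, gc1, invL,
        List.cons.injEq, true_and] <;>
      first | rfl | exact ih1 | exact ih2 | exact ih5 | exact ih6

end Aut870
namespace Aut870

open BinAutomaton Equiv

lemma perm_inv_apply (q : Fin 3) (w : List Bool) :
    (A870.perm q)⁻¹ w = A870inv.act q w := by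
  have h : A870.perm q (A870inv.act q w) = w := invR w q
  conv_lhs => rw [← h]
  exact Equiv.symm_apply_apply _ _

lemma a_apply (w : List Bool) : a w = A870.act 0 w := rfl
lemma b_apply (w : List Bool) : b w = A870.act 1 w := rfl
lemma c_apply (w : List Bool) : c w = A870.act 2 w := rfl
lemma ainv_apply (w : List Bool) : a⁻¹ w = A870inv.act 0 w := perm_inv_apply 0 w
lemma binv_apply (w : List Bool) : b⁻¹ w = A870inv.act 1 w := perm_inv_apply 1 w
lemma cinv_apply (w : List Bool) : c⁻¹ w = A870inv.act 2 w := perm_inv_apply 2 w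

/-- `c = a b⁻¹ a`. -/
lemma item1 : c = a * b⁻¹ * a := by
  refine Equiv.ext fun w => ?_
  rw [Perm.mul_apply, Perm.mul_apply, c_apply, a_apply, binv_apply, a_apply]
  exact (core w).1

-- pointwise description of μ = b⁻¹a and ν = a⁻¹b
lemma mu_apply (w : List Bool) : (b⁻¹ * a) w = A870inv.act 1 (A870.act 0 w) := by
  rw [Perm.mul_apply, binv_apply, a_apply]

lemma nu_apply (w : List Bool) : (a⁻¹ * b) w = A870inv.act 0 (A870.act 1 w) := by
  rw [Perm.mul_apply, ainv_apply, b_apply]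

lemma mu_false (w : List Bool) : (b⁻¹ * a) (false :: w) = true :: w := by
  rw [mu_apply, fa0, gb1, invL]

lemma mu_true (w : List Bool) : (b⁻¹ * a) (true :: w) = false :: (a⁻¹ * b) w := by
  rw [mu_apply, fa1, gb0, nu_apply]

lemma nu_false (w : List Bool) : (a⁻¹ * b) (false :: w) = true :: (b⁻¹ * a) w := by
  rw [nu_apply, fb0, ga0, mu_apply]

lemma nu_true (w : List Bool) : (a⁻¹ * b) (true :: w) = false :: w := by
  rw [nu_apply, fb1, ga1, invL]

lemma mu_nil : (b⁻¹ * a) ([] : List Bool) = [] := by rw [mu_apply]; rfl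
lemma nu_nil : (a⁻¹ * b) ([] : List Bool) = [] := by rw [nu_apply]; rfl

lemma I3 (u : List Bool) :
    A870inv.act 2 (A870.act 0 u) = A870inv.act 0 (A870.act 1 u) := by
  have h := congrArg (A870inv.act 2) (core u).2.1
  rwa [invL] at h

lemma item4core (w : List Bool) :
    A870inv.act 1 (A870inv.act 1 (A870.act 0 (A870.act 1 w))) =
    A870inv.act 1 (A870.act 0 (A870inv.act 1 (A870.act 0
      (A870inv.act 1 (A870.act 0 w))))) := by
  match w with
  | [] => rfl
  | false :: u =>
      simp only [fa0, fa1, fb0, fb1, fc0, fc1, ga0, ga1, gb0, gb1, gc0, gc1, invL, I3]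
  | true :: u =>
      simp only [fa0, fa1, fb0, fb1, fc0, fc1, ga0, ga1, gb0, gb1, gc0, gc1, invL,
        List.cons.injEq, true_and]
      exact congrArg _ (core u).2.2.1

/-- `b⁻¹ μ b = μ³`. -/
lemma item4 : b⁻¹ * (b⁻¹ * a) * b = (b⁻¹ * a) ^ 3 := by
  refine Equiv.ext fun w => ?_
  rw [pow_three]
  simp only [Perm.mul_apply]
  simp only [binv_apply, a_apply, b_apply]
  exact item4core w

-- squares
lemma mu_sq (x : Bool) (w : List Bool) :
    ((b⁻¹ * a) ^ 2) (x :: w) = x :: (a⁻¹ * b) w := by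
  rw [sq, Perm.mul_apply]
  cases x
  · rw [mu_false, mu_true]
  · rw [mu_true, mu_false]

lemma nu_sq (x : Bool) (w : List Bool) :
    ((a⁻¹ * b) ^ 2) (x :: w) = x :: (b⁻¹ * a) w := by
  rw [sq, Perm.mul_apply]
  cases x
  · rw [nu_false, nu_true]
  · rw [nu_true, nu_false]

lemma mu_pow_even (m : ℕ) (x : Bool) (w : List Bool) :
    ((b⁻¹ * a) ^ (2 * m)) (x :: w) = x :: ((a⁻¹ * b) ^ m) w := by
  induction m generalizing w with
  | zero => rfl
  | succ k ih =>
      rw [show 2 * (k + 1) = 2 * k + 2 by ring, pow_add, Perm.mul_apply, mu_sq, ih, pow_succ]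
      simp [Perm.mul_apply]

lemma nu_pow_even (m : ℕ) (x : Bool) (w : List Bool) :
    ((a⁻¹ * b) ^ (2 * m)) (x :: w) = x :: ((b⁻¹ * a) ^ m) w := by
  induction m generalizing w with
  | zero => rfl
  | succ k ih =>
      rw [show 2 * (k + 1) = 2 * k + 2 by ring, pow_add, Perm.mul_apply, nu_sq, ih, pow_succ]
      simp [Perm.mul_apply]

lemma mu_pow_nil (n : ℕ) : ((b⁻¹ * a) ^ n) ([] : List Bool) = [] := by
  induction n with
  | zero => rfl
  | succ k ih => rw [pow_succ, Perm.mul_apply, mu_nil, ih]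

lemma nu_pow_nil (n : ℕ) : ((a⁻¹ * b) ^ n) ([] : List Bool) = [] := by
  induction n with
  | zero => rfl
  | succ k ih => rw [pow_succ, Perm.mul_apply, nu_nil, ih]

/-- μ and ν have infinite order. -/
lemma mu_nu_pow_ne_one : ∀ n : ℕ, 0 < n →
    ((b⁻¹ * a) ^ n ≠ 1 ∧ (a⁻¹ * b) ^ n ≠ 1) := by
  intro n
  induction n using Nat.strong_induction_on with
  | _ n ih =>
    intro hn
    rcases Nat.even_or_odd n with ⟨m, hm⟩ | ⟨m, hm⟩
    · have hmpos : 0 < m := by omega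
      constructor
      · intro h
        have hnu : (a⁻¹ * b) ^ m = 1 := by
          refine Equiv.ext fun w => ?_
          have h2 : ((b⁻¹ * a) ^ (2 * m)) (false :: w) = false :: w := by
            rw [show 2 * m = n by omega, h, Perm.one_apply]
          rw [mu_pow_even] at h2
          simpa using h2
        exact (ih m (by omega) hmpos).2 hnu
      · intro h
        have hmu : (b⁻¹ * a) ^ m = 1 := by
          refine Equiv.ext fun w => ?_
          have h2 : ((a⁻¹ * b) ^ (2 * m)) (false :: w) = false :: w := by
            rw [show 2 * m = n by omega, h, Perm.one_apply]
          rw [nu_pow_even] at h2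
          simpa using h2
        exact (ih m (by omega) hmpos).1 hmu
    · constructor
      · intro h
        have h2 : ((b⁻¹ * a) ^ n) [false] = [false] := by rw [h, Perm.one_apply]
        rw [hm, pow_succ, Perm.mul_apply, mu_false, mu_pow_even, nu_pow_nil] at h2
        simp at h2
      · intro h
        have h2 : ((a⁻¹ * b) ^ n) [false] = [false] := by rw [h, Perm.one_apply]
        rw [hm, pow_succ, Perm.mul_apply, nu_false, mu_nil, nu_pow_even, mu_pow_nil] at h2
        simp at h2

lemma item2 : ¬ IsOfFinOrder (b⁻¹ * a) := by
  intro h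
  obtain ⟨n, hn, h1⟩ := isOfFinOrder_iff_pow_eq_one.mp h
  exact (mu_nu_pow_ne_one n hn).1 h1

end Aut870
namespace Aut870

open BinAutomaton Equiv

lemma b_pow_false (n : ℕ) (w : List Bool) :
    (b ^ n) (false :: w) = false :: (a ^ n) w := by
  induction n generalizing w with
  | zero => rfl
  | succ k ih =>
      rw [pow_succ, Perm.mul_apply, show b (false :: w) = false :: a w from rfl, ih,
        pow_succ]
      simp [Perm.mul_apply]

lemma a_sq_false (w : List Bool) :
    (a ^ 2) (false :: w) = false :: (b * c) w := by
  rw [sq, Perm.mul_apply]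
  rfl

lemma a_pow_even (m : ℕ) (w : List Bool) :
    (a ^ (2 * m)) (false :: w) = false :: ((b * c) ^ m) w := by
  induction m generalizing w with
  | zero => rfl
  | succ k ih =>
      rw [show 2 * (k + 1) = 2 * k + 2 by ring, pow_add, Perm.mul_apply, a_sq_false, ih,
        pow_succ]
      simp [Perm.mul_apply]

lemma bc_nil : (b * c) ([] : List Bool) = [] := rfl

lemma bc_pow_nil (m : ℕ) : ((b * c) ^ m) ([] : List Bool) = [] := by
  induction m with
  | zero => rfl
  | succ k ih => rw [pow_succ, Perm.mul_apply, bc_nil, ih]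

lemma hc2 : c = b * (b⁻¹ * a) ^ 2 := by rw [item1]; simp [sq, mul_assoc]

lemma hbc : b * c = b ^ 2 * (b⁻¹ * a) ^ 2 := by rw [item1]; simp [sq, mul_assoc]

lemma mub : (b⁻¹ * a) * b = b * (b⁻¹ * a) ^ 3 := by rw [← item4]; simp [mul_assoc]

lemma mu_pow_b (j : ℕ) : (b⁻¹ * a) ^ j * b = b * (b⁻¹ * a) ^ (3 * j) := by
  induction j with
  | zero => simp
  | succ k ih =>
      rw [show 3 * (k + 1) = 3 * k + 3 by ring, pow_succ, mul_assoc, mub, ← mul_assoc,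
        ih, mul_assoc, ← pow_add]

lemma mu_pow_b2 (j : ℕ) : (b⁻¹ * a) ^ j * b ^ 2 = b ^ 2 * (b⁻¹ * a) ^ (9 * j) := by
  rw [sq, ← mul_assoc, mu_pow_b, mul_assoc, mu_pow_b, ← mul_assoc,
    show 3 * (3 * j) = 9 * j by ring]

lemma pows (m : ℕ) : ∃ j : ℕ, 0 < j ∧
    (b ^ 2 * (b⁻¹ * a) ^ 2) ^ (m + 1) = b ^ (2 * (m + 1)) * (b⁻¹ * a) ^ j := by
  induction m with
  | zero => exact ⟨2, by norm_num, by rw [pow_one]⟩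
  | succ k ih =>
      obtain ⟨j, hj, he⟩ := ih
      refine ⟨9 * j + 2, by omega, ?_⟩
      calc (b ^ 2 * (b⁻¹ * a) ^ 2) ^ (k + 1 + 1)
          = (b ^ (2 * (k + 1)) * (b⁻¹ * a) ^ j) * (b ^ 2 * (b⁻¹ * a) ^ 2) := by
            rw [pow_succ, he]
        _ = b ^ (2 * (k + 1)) * (((b⁻¹ * a) ^ j * b ^ 2) * (b⁻¹ * a) ^ 2) := by
            rw [mul_assoc, ← mul_assoc ((b⁻¹ * a) ^ j)]
        _ = b ^ (2 * (k + 1)) * (b ^ 2 * ((b⁻¹ * a) ^ (9 * j) * (b⁻¹ * a) ^ 2)) := by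
            rw [mu_pow_b2, mul_assoc]
        _ = b ^ (2 * (k + 1 + 1)) * (b⁻¹ * a) ^ (9 * j + 2) := by
            rw [← mul_assoc, ← pow_add, ← pow_add, show 2 * (k+1) + 2 = 2 * (k+1+1) by ring]

lemma item3 : ¬ IsOfFinOrder b := by
  intro hfin
  obtain ⟨n, hn, h⟩ := isOfFinOrder_iff_pow_eq_one.mp hfin
  have ha : a ^ n = 1 := by
    refine Equiv.ext fun w => ?_
    have h2 : (b ^ n) (false :: w) = false :: w := by rw [h, Perm.one_apply]
    rw [b_pow_false] at h2
    simpa using h2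
  rcases Nat.even_or_odd n with ⟨m, hm⟩ | ⟨m, hm⟩
  · have hmpos : 0 < m := by omega
    have hbc1 : (b * c) ^ m = 1 := by
      refine Equiv.ext fun w => ?_
      have h2 : (a ^ (2 * m)) (false :: w) = false :: w := by
        rw [show 2 * m = n by omega, ha, Perm.one_apply]
      rw [a_pow_even] at h2
      simpa using h2
    obtain ⟨m', rfl⟩ : ∃ m', m = m' + 1 := ⟨m - 1, by omega⟩
    obtain ⟨j, hj, he⟩ := pows m'
    have h1 : ((b ^ 2 * (b⁻¹ * a) ^ 2) ^ (m' + 1) : Perm (List Bool)) = 1 := by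
      rw [← hbc, hbc1]
    rw [he, show 2 * (m' + 1) = n by omega, h, one_mul] at h1
    exact (mu_nu_pow_ne_one j hj).1 h1
  · have h2 : (a ^ n) [true] = [true] := by rw [ha, Perm.one_apply]
    rw [hm, pow_succ, Perm.mul_apply, show a [true] = [false] from rfl, a_pow_even,
      bc_pow_nil] at h2
    simp at h2

end Aut870
namespace Aut870

open Equiv

noncomputable def fgen : Fin 2 → Perm (List Bool) := ![b, b⁻¹ * a]

lemma hrels : ∀ r ∈ relsBS13, FreeGroup.lift fgen r = 1 := by
  intro r hr
  rw [relsBS13, Set.mem_singleton_iff] at hr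
  subst hr
  simp only [map_mul, map_inv, map_pow, FreeGroup.lift_apply_of, fgen,
    Matrix.cons_val_zero, Matrix.cons_val_one, Matrix.head_cons]
  rw [item4, mul_inv_cancel]

noncomputable def φ : PresentedGroup relsBS13 →* Perm (List Bool) :=
  PresentedGroup.toGroup hrels

lemma φ_of0 : φ (PresentedGroup.of 0) = b := by
  rw [φ, PresentedGroup.toGroup.of]
  simp [fgen]

lemma φ_of1 : φ (PresentedGroup.of 1) = b⁻¹ * a := by
  rw [φ, PresentedGroup.toGroup.of]
  simp [fgen]

lemma relP : (PresentedGroup.of 0 : PresentedGroup relsBS13)⁻¹ * PresentedGroup.of 1 *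
    PresentedGroup.of 0 = (PresentedGroup.of 1) ^ 3 := by
  have h : PresentedGroup.mk relsBS13 ((FreeGroup.of 0)⁻¹ * FreeGroup.of 1 * FreeGroup.of 0 *
      ((FreeGroup.of 1) ^ 3)⁻¹) = 1 := by
    apply (QuotientGroup.eq_one_iff _).mpr
    exact Subgroup.subset_normalClosure rfl
  simp only [map_mul, map_inv, map_pow] at h
  exact mul_inv_eq_one.mp h

end Aut870
namespace Aut870

open Equiv

local notation "T" => (PresentedGroup.of 0 : PresentedGroup relsBS13)
local notation "X" => (PresentedGroup.of 1 : PresentedGroup relsBS13)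

lemma conjP (m : ℤ) : T⁻¹ * X ^ m * T = X ^ (3 * m) := by
  calc T⁻¹ * X ^ m * T = T⁻¹ * X ^ m * T⁻¹⁻¹ := by rw [inv_inv]
    _ = (T⁻¹ * X * T⁻¹⁻¹) ^ m := (conj_zpow).symm
    _ = (X ^ (3 : ℕ)) ^ m := by rw [inv_inv, relP]
    _ = X ^ (3 * m) := by
        rw [← zpow_natCast (PresentedGroup.of 1 : PresentedGroup relsBS13) 3, ← zpow_mul]
        norm_num

lemma stepTX (m : ℤ) : X ^ m * T = T * X ^ (3 * m) := by
  rw [← conjP m]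
  group

lemma commTX (j : ℕ) (m : ℤ) : X ^ m * T ^ j = T ^ j * X ^ (3 ^ j * m) := by
  induction j generalizing m with
  | zero => simp
  | succ k ih =>
      rw [pow_succ, ← mul_assoc, ih, mul_assoc, stepTX, ← mul_assoc, ← pow_succ,
        show 3 * (3 ^ k * m) = 3 ^ (k + 1) * m by ring]

lemma swap_inv {G : Type*} [Group G] (A Y Z : G) (h : Y * A = A * Z) :
    A⁻¹ * Y = Z * A⁻¹ := by
  calc A⁻¹ * Y = A⁻¹ * (Y * A) * A⁻¹ := by group
    _ = A⁻¹ * (A * Z) * A⁻¹ := by rw [h]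
    _ = Z * A⁻¹ := by group

lemma range_of : Set.range (PresentedGroup.of (rels := relsBS13)) =
    {(PresentedGroup.of 0 : PresentedGroup relsBS13), PresentedGroup.of 1} := by
  ext g
  constructor
  · rintro ⟨i, rfl⟩
    fin_cases i
    · exact Or.inl rfl
    · exact Or.inr rfl
  · rintro (rfl | rfl)
    exacts [⟨0, rfl⟩, ⟨1, rfl⟩]

lemma normal_form (g : PresentedGroup relsBS13) :
    ∃ (p q : ℕ) (m : ℤ), g = T ^ p * X ^ m * (T ^ q)⁻¹ := by
  have hg : g ∈ Subgroup.closure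
      ({(PresentedGroup.of 0 : PresentedGroup relsBS13), PresentedGroup.of 1}) := by
    rw [← range_of, PresentedGroup.closure_range_of]
    exact Subgroup.mem_top g
  refine Subgroup.closure_induction_right
    (p := fun x _ => ∃ p q m, x = T ^ p * X ^ m * (T ^ q)⁻¹) ?_ ?_ ?_ hg
  · exact ⟨0, 0, 0, by simp⟩
  · -- multiply on the right by a generator
    rintro x _ y (rfl | rfl) ⟨p, q, m, rfl⟩
    · -- y = T
      cases q with
      | zero =>
          refine ⟨p + 1, 0, 3 * m, ?_⟩
          rw [pow_zero, inv_one, mul_one, mul_one, mul_assoc, stepTX, ← mul_assoc,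
            ← pow_succ]
      | succ q' =>
          refine ⟨p, q', m, ?_⟩
          have h : (T ^ (q' + 1))⁻¹ * T = (T ^ q')⁻¹ := by
            rw [pow_succ', mul_inv_rev, mul_assoc, inv_mul_cancel, mul_one]
          rw [mul_assoc, h]
    · -- y = X
      refine ⟨p, q, m + 3 ^ q, ?_⟩
      have h2 := commTX q 1
      rw [zpow_one, mul_one] at h2
      have h := swap_inv _ _ _ h2
      rw [mul_assoc, h, ← mul_assoc, mul_assoc (T ^ p), ← zpow_add]
  · -- multiply on the right by the inverse of a generator
    rintro x _ y (rfl | rfl) ⟨p, q, m, rfl⟩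
    · -- y = T⁻¹
      refine ⟨p, q + 1, m, ?_⟩
      rw [pow_succ, mul_inv_rev]
      group
    · -- y = X⁻¹
      refine ⟨p, q, m - 3 ^ q, ?_⟩
      have h2 := commTX q (-1)
      rw [show ((3:ℤ) ^ q * (-1)) = -(3:ℤ)^q by ring, zpow_neg, zpow_one] at h2
      have h := swap_inv _ _ _ h2
      rw [mul_assoc, h, ← mul_assoc, mul_assoc (T ^ p), ← zpow_add, show m + -(3:ℤ) ^ q = m - 3 ^ q by ring]

end Aut870
namespace Aut870

open Equiv

lemma conjPerm (m : ℤ) : b⁻¹ * (b⁻¹ * a) ^ m * b = (b⁻¹ * a) ^ (3 * m) := by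
  calc b⁻¹ * (b⁻¹*a) ^ m * b = b⁻¹ * (b⁻¹*a) ^ m * b⁻¹⁻¹ := by rw [inv_inv]
    _ = (b⁻¹ * (b⁻¹*a) * b⁻¹⁻¹) ^ m := (conj_zpow).symm
    _ = ((b⁻¹*a) ^ (3:ℕ)) ^ m := by rw [inv_inv, item4]
    _ = (b⁻¹*a) ^ (3*m) := by rw [← zpow_natCast (b⁻¹*a) 3, ← zpow_mul]; norm_num

lemma phi_ker (g : PresentedGroup relsBS13) (hg : φ g = 1) : g = 1 := by
  obtain ⟨p, q, m, rfl⟩ := normal_form g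
  rw [map_mul, map_mul, map_inv, map_pow, map_pow, map_zpow, φ_of0, φ_of1] at hg
  have hg' : b ^ p * (b⁻¹ * a) ^ m = b ^ q := mul_inv_eq_one.mp hg
  have h1 : (b⁻¹*a) ^ m = (b ^ p)⁻¹ * b ^ q := by rw [← hg']; group
  have h2 : (b⁻¹*a) ^ (3*m) = (b⁻¹*a) ^ m := by
    calc (b⁻¹*a)^(3*m) = b⁻¹ * (b⁻¹*a)^m * b := (conjPerm m).symm
      _ = b⁻¹ * ((b ^ p)⁻¹ * b ^ q) * b := by rw [h1]
      _ = (b ^ p)⁻¹ * b ^ q := by group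
      _ = (b⁻¹*a) ^ m := h1.symm
  have hm : 3 * m = m := injective_zpow_iff_not_isOfFinOrder.mpr item2 h2
  have hm0 : m = 0 := by omega
  subst hm0
  have h4 : (b : Perm (List Bool)) ^ (p:ℤ) = b ^ (q:ℤ) := by
    rw [zpow_natCast, zpow_natCast, ← hg']
    simp
  have h5 : (p:ℤ) = (q:ℤ) := injective_zpow_iff_not_isOfFinOrder.mpr item3 h4
  obtain rfl : p = q := by omega
  simp

lemma phi_inj : Function.Injective φ := by
  intro x y h
  have h1 : φ (x * y⁻¹) = 1 := by rw [map_mul, map_inv, h, mul_inv_cancel]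
  have h2 := phi_ker _ h1
  rw [mul_inv_eq_one] at h2
  exact h2

lemma mem_closure (g : PresentedGroup relsBS13) :
    φ g ∈ Subgroup.closure ({a, b, c} : Set (Perm (List Bool))) := by
  have ha : a ∈ Subgroup.closure ({a, b, c} : Set (Perm (List Bool))) :=
    Subgroup.subset_closure (by simp)
  have hb : b ∈ Subgroup.closure ({a, b, c} : Set (Perm (List Bool))) :=
    Subgroup.subset_closure (by simp)
  obtain ⟨p, q, m, rfl⟩ := normal_form g
  rw [map_mul, map_mul, map_inv, map_pow, map_pow, map_zpow, φ_of0, φ_of1]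
  exact mul_mem (mul_mem (pow_mem hb p) (zpow_mem (mul_mem (inv_mem hb) ha) m))
    (inv_mem (pow_mem hb q))

lemma closure_le_range :
    Subgroup.closure ({a, b, c} : Set (Perm (List Bool))) ≤ φ.range := by
  rw [Subgroup.closure_le]
  intro g hg
  simp only [Set.mem_insert_iff, Set.mem_singleton_iff] at hg
  rcases hg with rfl | rfl | rfl
  · exact ⟨PresentedGroup.of 0 * PresentedGroup.of 1, by
      rw [map_mul, φ_of0, φ_of1]; group⟩
  · exact ⟨PresentedGroup.of 0, φ_of0⟩
  · exact ⟨PresentedGroup.of 0 * (PresentedGroup.of 1) ^ 2, by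
      rw [map_mul, map_pow, φ_of0, φ_of1]; exact hc2.symm⟩

noncomputable def ψ : PresentedGroup relsBS13 →*
    (Subgroup.closure ({a, b, c} : Set (Perm (List Bool)))) :=
  φ.codRestrict _ mem_closure

lemma ψ_bij : Function.Bijective ψ := by
  constructor
  · intro x y h
    exact phi_inj (congrArg Subtype.val h)
  · rintro ⟨g, hg⟩
    obtain ⟨x, hx⟩ := closure_le_range hg
    exact ⟨x, Subtype.ext hx⟩

end Aut870


/-- The group generated by automaton 870 is the Baumslag–Solitar group
`BS(1,3)`: one has `c = ab⁻¹a`, the elements `μ = b⁻¹a` and `b` have infinite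
order, `b⁻¹μb = μ³`, and the group generated by `a`, `b`, `c` is isomorphic to
`BS(1,3) = ⟨t, x ∣ t⁻¹xt = x³⟩` via `t ↦ b`, `x ↦ b⁻¹a`. -/
theorem automaton870_group_is_BS13 :
    c = a * b⁻¹ * a ∧
    ¬ IsOfFinOrder (b⁻¹ * a) ∧
    ¬ IsOfFinOrder b ∧
    b⁻¹ * (b⁻¹ * a) * b = (b⁻¹ * a) ^ 3 ∧
    ∃ e : PresentedGroup relsBS13 ≃* ↥(Subgroup.closure {a, b, c}),
      (↑(e (PresentedGroup.of 0)) : Equiv.Perm (List Bool)) = b ∧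
      (↑(e (PresentedGroup.of 1)) : Equiv.Perm (List Bool)) = b⁻¹ * a := by
  refine ⟨Aut870.item1, Aut870.item2, Aut870.item3, Aut870.item4,
    MulEquiv.ofBijective Aut870.ψ Aut870.ψ_bij, ?_, ?_⟩
  · exact Aut870.φ_of0
  · exact Aut870.φ_of1
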